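/- arXiv:2307.03782 — 5 statements merged into one kernel-verified Lean document; each statement's English description precedes it below -/
import Mathlib

section
/- Let A and B be separable unital C*-algebras, and suppose there exist unital *-homomorphisms φ : A → B and ψ : B → A such that ψ ∘ φ is approximately unitarily equivalent to the identity map of A and φ ∘ ψ is approximately unitarily equivalent to the identity map of B. Then A and B are isomorphic, i.e. there exists a *-algebra isomorphism from A onto B. -/
/-!
Conjugating `φ` and `ψ` by suitably chosen unitaries produces a zig-zag diagram
`A → B → A → B → ⋯` of maps `Φₙ = Ad uₙ ∘ φ`, `Ψₙ = Ad wₙ ∘ ψ` whose triangles commute up to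
`2⁻ⁿ` on finite sets that eventually contain every term of dense sequences of `A` and `B`.
Since `*`-homomorphisms of C*-algebras are contractive, the summable errors make `Φₙ x` Cauchy
on a dense set, hence everywhere; so `Φₙ` and `Ψₙ` converge pointwise to `*`-homomorphisms,
which are mutually inverse because the triangle errors tend to zero.
-/

open Filter Topology

/-- Two maps `φ ψ : A → B` between unital C*-algebras are *approximately unitarily
equivalent* if for every finite subset `F ⊆ A` and every `ε > 0` there is a unitary
`u ∈ B` with `‖u φ(x) u* - ψ(x)‖ < ε` for all `x ∈ F`. -/
def ApproxUnitarilyEquiv {A B : Type*} [CStarAlgebra A] [CStarAlgebra B]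
    (φ ψ : A → B) : Prop :=
  ∀ (F : Finset A) (ε : ℝ), 0 < ε →
    ∃ u : unitary B, ∀ x ∈ F, ‖(u : B) * φ x * star (u : B) - ψ x‖ < ε

theorem cauchySeq_apply_of_dense {X Y : Type*} [PseudoMetricSpace X] [PseudoMetricSpace Y]
    {f : ℕ → X → Y} (hf : ∀ n, LipschitzWith 1 (f n)) {s : Set X} (hs : Dense s)
    (h : ∀ y ∈ s, CauchySeq (f · y)) (x : X) : CauchySeq (f · x) := by
  refine Metric.cauchySeq_iff.2 fun ε hε => ?_
  obtain ⟨y, hxy, hys⟩ := Metric.dense_iff.1 hs x (ε / 3) (by positivity)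
  obtain ⟨N, hN⟩ := Metric.cauchySeq_iff.1 (h y hys) (ε / 3) (by positivity)
  refine ⟨N, fun m hm n hn => ?_⟩
  have hxy' : dist x y < ε / 3 := by simpa [dist_comm] using hxy
  calc dist (f m x) (f n x)
      ≤ dist (f m x) (f m y) + dist (f m y) (f n y) + dist (f n y) (f n x) :=
        dist_triangle4 _ _ _ _
    _ < ε / 3 + ε / 3 + ε / 3 := by
        gcongr
        · exact ((hf m).dist_le_mul x y).trans_lt (by simpa using hxy')
        · exact hN m hm n hn
        · exact ((hf n).dist_le_mul y x).trans_lt (by simpa [dist_comm] using hxy')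
    _ = ε := by ring

theorem Filter.Tendsto.apply_of_lipschitzWith {ι X Y : Type*} [PseudoMetricSpace X]
    [PseudoMetricSpace Y] {l : Filter ι} {f : ι → X → Y} {g : X → Y}
    (hf : ∀ i, LipschitzWith 1 (f i)) (hfg : ∀ x, Tendsto (f · x) l (𝓝 (g x))) {x : ι → X}
    {x₀ : X} (hx : Tendsto x l (𝓝 x₀)) :
    Tendsto (fun i => f i (x i)) l (𝓝 (g x₀)) := by
  have hbound : Tendsto (fun i => dist (x i) x₀ + dist (f i x₀) (g x₀)) l (𝓝 0) := by
    simpa using (tendsto_iff_dist_tendsto_zero.1 hx).add (tendsto_iff_dist_tendsto_zero.1 (hfg x₀))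
  refine tendsto_iff_dist_tendsto_zero.2
    (squeeze_zero (fun _ => dist_nonneg) (fun i => ?_) hbound)
  calc dist (f i (x i)) (g x₀) ≤ dist (f i (x i)) (f i x₀) + dist (f i x₀) (g x₀) :=
        dist_triangle _ _ _
    _ ≤ dist (x i) x₀ + dist (f i x₀) (g x₀) := by
        gcongr; simpa using (hf i).dist_le_mul (x i) x₀

namespace StarAlgHom

variable {R A B : Type*} [CommSemiring R] [Semiring A] [Algebra R A] [Star A]
  [Semiring B] [Algebra R B] [Star B] [TopologicalSpace B] [IsTopologicalSemiring B]
  [ContinuousStar B] [T2Space B]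

noncomputable def ofTendsto {ι : Type*} {l : Filter ι} [l.NeBot] (f : ι → A →⋆ₐ[R] B)
    (g : A → B) (h : ∀ x, Tendsto (f · x) l (𝓝 (g x))) : A →⋆ₐ[R] B where
  toFun := g
  map_one' := tendsto_nhds_unique (h 1) (by simp)
  map_mul' x y := tendsto_nhds_unique (h (x * y)) (by simpa using (h x).mul (h y))
  map_zero' := tendsto_nhds_unique (h 0) (by simp)
  map_add' x y := tendsto_nhds_unique (h (x + y)) (by simpa using (h x).add (h y))
  commutes' r := tendsto_nhds_unique (h _)
    (by simpa only [AlgHomClass.commutes] using tendsto_const_nhds)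
  map_star' x := tendsto_nhds_unique (h (star x)) (by simpa only [map_star] using (h x).star)

end StarAlgHom

open scoped CStarAlgebra in
theorem StarAlgHom.lipschitzWith_one {A B : Type*} [CStarAlgebra A] [CStarAlgebra B]
    (f : A →⋆ₐ[ℂ] B) : LipschitzWith 1 f :=
  AddMonoidHomClass.lipschitz_of_bound_nnnorm f 1
    (by simpa using NonUnitalStarAlgHom.nnnorm_apply_le f)

open Unitary

namespace ApproxUnitarilyEquiv

variable {A B : Type*} [CStarAlgebra A] [CStarAlgebra B]

theorem conj {f g : A → B} (h : ApproxUnitarilyEquiv f g) (u : unitary B) :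
    ApproxUnitarilyEquiv (fun x => conjStarAlgAut ℂ B u (f x)) g := by
  intro F ε hε
  obtain ⟨v, hv⟩ := h F ε hε
  refine ⟨v * star u, fun x hx => ?_⟩
  have hvu : v * star u * u = v := by rw [mul_assoc, Unitary.star_mul_self, mul_one]
  rw [← conjStarAlgAut_apply (S := ℂ), ← conjStarAlgAut_mul_apply, hvu]
  exact hv x hx

theorem comp_conj {φ : A →⋆ₐ[ℂ] B} {ψ : B →⋆ₐ[ℂ] A}
    (h : ApproxUnitarilyEquiv (fun x => ψ (φ x)) id) (u : unitary B) :
    ApproxUnitarilyEquiv (fun x => ψ (conjStarAlgAut ℂ B u (φ x))) id := by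
  have hψ (y : B) : ψ (conjStarAlgAut ℂ B u y)
      = conjStarAlgAut ℂ A (Unitary.map (StarMonoidHom.ofClass ψ) u) (ψ y) := by
    simp [map_mul, map_star]
  simpa only [hψ] using h.conj _

noncomputable def chooseUnitary {f g : A → B} (h : ApproxUnitarilyEquiv f g) (F : Finset A)
    {ε : ℝ} (hε : 0 < ε) : unitary B :=
  (h F ε hε).choose

theorem dist_conj_chooseUnitary_lt {f g : A → B} (h : ApproxUnitarilyEquiv f g) {F : Finset A}
    {ε : ℝ} (hε : 0 < ε) :
    ∀ x ∈ F, dist (conjStarAlgAut ℂ B (h.chooseUnitary F hε) (f x)) (g x) < ε := by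
  simpa [dist_eq_norm, chooseUnitary] using (h F ε hε).choose_spec

end ApproxUnitarilyEquiv

structure ApproxIntertwining (A B : Type*) [CStarAlgebra A] [CStarAlgebra B] where
  Φ : ℕ → A →⋆ₐ[ℂ] B
  Ψ : ℕ → B →⋆ₐ[ℂ] A
  F : ℕ → Set A
  G : ℕ → Set B
  ε : ℕ → ℝ
  antitone_ε : Antitone ε
  summable_ε : Summable ε
  dense_F : Dense {x | ∀ᶠ n in atTop, x ∈ F n}
  dense_G : Dense {y | ∀ᶠ n in atTop, y ∈ G n}
  mapsTo_Φ n : Set.MapsTo (Φ n) (F n) (G n)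
  mapsTo_Ψ n : Set.MapsTo (Ψ n) (G n) (F (n + 1))
  dist_Ψ_Φ_le n : ∀ x ∈ F n, dist (Ψ n (Φ n x)) x ≤ ε n
  dist_Φ_Ψ_le n : ∀ y ∈ G n, dist (Φ (n + 1) (Ψ n y)) y ≤ ε n

namespace ApproxIntertwining

section Limit

variable {A B : Type*} [CStarAlgebra A] [CStarAlgebra B] (I : ApproxIntertwining A B)

/-- The same diagram read from `B` onwards; its limit map is the inverse of `limΦ`. -/
def swap : ApproxIntertwining B A where
  Φ := I.Ψ
  Ψ n := I.Φ (n + 1)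
  F := I.G
  G n := I.F (n + 1)
  ε := I.ε
  antitone_ε := I.antitone_ε
  summable_ε := I.summable_ε
  dense_F := I.dense_G
  dense_G := I.dense_F.mono fun x (hx : ∀ᶠ n in atTop, x ∈ I.F n) =>
    (tendsto_add_atTop_nat 1).eventually hx
  mapsTo_Φ := I.mapsTo_Ψ
  mapsTo_Ψ n := I.mapsTo_Φ (n + 1)
  dist_Ψ_Φ_le := I.dist_Φ_Ψ_le
  dist_Φ_Ψ_le n x hx := (I.dist_Ψ_Φ_le (n + 1) x hx).trans (I.antitone_ε n.le_succ)

theorem dist_Φ_succ_le {n : ℕ} {x : A} (hx : x ∈ I.F n) :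
    dist (I.Φ n x) (I.Φ (n + 1) x) ≤ 2 * I.ε n :=
  calc dist (I.Φ n x) (I.Φ (n + 1) x)
      ≤ dist (I.Φ n x) (I.Φ (n + 1) (I.Ψ n (I.Φ n x)))
        + dist (I.Φ (n + 1) (I.Ψ n (I.Φ n x))) (I.Φ (n + 1) x) := dist_triangle _ _ _
    _ ≤ I.ε n + dist (I.Ψ n (I.Φ n x)) x := by
        gcongr
        · rw [dist_comm]; exact I.dist_Φ_Ψ_le n _ (I.mapsTo_Φ n hx)
        · simpa using (StarAlgHom.lipschitzWith_one (I.Φ (n + 1))).dist_le_mul _ x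
    _ ≤ 2 * I.ε n := by linarith [I.dist_Ψ_Φ_le n x hx]

theorem cauchySeq_Φ_of_eventually_mem {x : A} (hx : ∀ᶠ n in atTop, x ∈ I.F n) :
    CauchySeq (I.Φ · x) := by
  obtain ⟨N, hN⟩ := eventually_atTop.1 hx
  refine (cauchySeq_shift N).1 (cauchySeq_of_dist_le_of_summable (fun n => 2 * I.ε (n + N))
    (fun n => ?_) ?_)
  · rw [Nat.succ_add]
    exact I.dist_Φ_succ_le (hN _ le_add_self)
  · exact ((summable_nat_add_iff N).2 I.summable_ε).mul_left 2

theorem cauchySeq_Φ (x : A) : CauchySeq (I.Φ · x) :=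
  cauchySeq_apply_of_dense (fun n => StarAlgHom.lipschitzWith_one (I.Φ n)) I.dense_F
    (fun _ => I.cauchySeq_Φ_of_eventually_mem) x

noncomputable def limΦ : A →⋆ₐ[ℂ] B :=
  StarAlgHom.ofTendsto I.Φ (fun x => limUnder atTop (I.Φ · x))
    fun x => (I.cauchySeq_Φ x).tendsto_limUnder

theorem tendsto_limΦ (x : A) : Tendsto (I.Φ · x) atTop (𝓝 (I.limΦ x)) :=
  (I.cauchySeq_Φ x).tendsto_limUnder

open scoped CStarAlgebra in
theorem comp_eq_id_of_tendsto {f : A →⋆ₐ[ℂ] B} {g : B →⋆ₐ[ℂ] A}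
    (hf : ∀ x, Tendsto (I.Φ · x) atTop (𝓝 (f x)))
    (hg : ∀ y, Tendsto (I.Ψ · y) atTop (𝓝 (g y))) :
    g.comp f = StarAlgHom.id ℂ A := by
  refine StarAlgHom.ext (congrFun (Continuous.ext_on I.dense_F (map_continuous (g.comp f))
    continuous_id fun x hx => ?_))
  have hΨΦ : Tendsto (fun n => I.Ψ n (I.Φ n x)) atTop (𝓝 (g (f x))) :=
    (hf x).apply_of_lipschitzWith (fun n => StarAlgHom.lipschitzWith_one (I.Ψ n)) hg
  refine tendsto_nhds_unique hΨΦ (tendsto_iff_dist_tendsto_zero.2 (squeeze_zero'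
    (Eventually.of_forall fun _ => dist_nonneg) (hx.mono fun n hn => I.dist_Ψ_Φ_le n x hn)
    I.summable_ε.tendsto_atTop_zero))

noncomputable def starAlgEquiv : A ≃⋆ₐ[ℂ] B :=
  StarAlgEquiv.ofStarAlgHom I.limΦ I.swap.limΦ
    (I.comp_eq_id_of_tendsto I.tendsto_limΦ I.swap.tendsto_limΦ)
    (I.swap.comp_eq_id_of_tendsto I.swap.tendsto_limΦ
      fun x => (tendsto_add_atTop_iff_nat 1).2 (I.tendsto_limΦ x))

end Limit

section Construction

variable {A B : Type*} [CStarAlgebra A] [CStarAlgebra B] {φ : A →⋆ₐ[ℂ] B} {ψ : B →⋆ₐ[ℂ] A}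
  (h1 : ApproxUnitarilyEquiv (fun x => ψ (φ x)) id)
  (h2 : ApproxUnitarilyEquiv (fun y => φ (ψ y)) id) (a : ℕ → A) (b : ℕ → B)

open scoped Classical

noncomputable def stageG (n : ℕ) (F : Finset A) (u : unitary B) : Finset B :=
  (Finset.range (n + 1)).image b ∪ F.image fun x => conjStarAlgAut ℂ B u (φ x)

noncomputable def stageW (n : ℕ) (F : Finset A) (u : unitary B) : unitary A :=
  (h1.comp_conj u).chooseUnitary F (by positivity : (0 : ℝ) < (1 / 2) ^ n)

/-- `stage n = (Fₙ, uₙ)`, with `Φₙ = Ad uₙ ∘ φ`; then `Gₙ = stageG n Fₙ uₙ` and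
`Ψₙ = Ad wₙ ∘ ψ` for `wₙ = stageW n Fₙ uₙ`. -/
noncomputable def stage : ℕ → Finset A × unitary B
  | 0 => (∅, 1)
  | n + 1 =>
    let w := stageW h1 n (stage n).1 (stage n).2
    let G := stageG (φ := φ) b n (stage n).1 (stage n).2
    ((Finset.range (n + 1)).image a ∪ G.image fun y => conjStarAlgAut ℂ A w (ψ y),
      (h2.comp_conj w).chooseUnitary G (by positivity : (0 : ℝ) < (1 / 2) ^ n))

noncomputable def ofApproxUnitarilyEquiv (ha : DenseRange a) (hb : DenseRange b) :
    ApproxIntertwining A B where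
  Φ n := (conjStarAlgAut ℂ B (stage h1 h2 a b n).2).toStarAlgHom.comp φ
  Ψ n := (conjStarAlgAut ℂ A
    (stageW h1 n (stage h1 h2 a b n).1 (stage h1 h2 a b n).2)).toStarAlgHom.comp ψ
  F n := (stage h1 h2 a b n).1
  G n := stageG (φ := φ) b n (stage h1 h2 a b n).1 (stage h1 h2 a b n).2
  ε n := (1 / 2) ^ n
  antitone_ε := pow_right_anti₀ (by norm_num) (by norm_num)
  summable_ε := summable_geometric_two
  dense_F := by
    refine ha.mono ?_
    rintro _ ⟨k, rfl⟩
    refine eventually_atTop.2 ⟨k + 1, fun n hn => ?_⟩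
    obtain ⟨m, rfl⟩ : ∃ m, n = m + 1 := ⟨n - 1, by omega⟩
    exact Finset.mem_union_left _ (Finset.mem_image_of_mem _ (Finset.mem_range.2 (by omega)))
  dense_G := by
    refine hb.mono ?_
    rintro _ ⟨k, rfl⟩
    exact eventually_atTop.2 ⟨k, fun n hn =>
      Finset.mem_union_left _ (Finset.mem_image_of_mem _ (Finset.mem_range.2 (by omega)))⟩
  mapsTo_Φ n _ hx := Finset.mem_union_right _ (Finset.mem_image_of_mem _ hx)
  mapsTo_Ψ n _ hy := Finset.mem_union_right _ (Finset.mem_image_of_mem _ hy)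
  dist_Ψ_Φ_le n x hx := ((h1.comp_conj _).dist_conj_chooseUnitary_lt _ x hx).le
  dist_Φ_Ψ_le n y hy :=
    ((h2.comp_conj _).dist_conj_chooseUnitary_lt (by positivity : (0 : ℝ) < (1 / 2) ^ n) y hy).le

end Construction

end ApproxIntertwining

/-- Elliott's two-sided intertwining argument: if `φ : A → B` and `ψ : B → A` are unital
`*`-homomorphisms between separable unital C*-algebras with `ψ ∘ φ ≈au id_A` and
`φ ∘ ψ ≈au id_B`, then `A ≅ B`. -/
theorem elliott_two_sided_intertwining
    {A B : Type*} [CStarAlgebra A] [CStarAlgebra B]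
    [TopologicalSpace.SeparableSpace A] [TopologicalSpace.SeparableSpace B]
    (φ : A →⋆ₐ[ℂ] B) (ψ : B →⋆ₐ[ℂ] A)
    (h1 : ApproxUnitarilyEquiv (fun a => ψ (φ a)) (id : A → A))
    (h2 : ApproxUnitarilyEquiv (fun b => φ (ψ b)) (id : B → B)) :
    Nonempty (A ≃⋆ₐ[ℂ] B) := by
  obtain ⟨a, ha⟩ := TopologicalSpace.exists_dense_seq A
  obtain ⟨b, hb⟩ := TopologicalSpace.exists_dense_seq B
  exact ⟨(ApproxIntertwining.ofApproxUnitarilyEquiv h1 h2 a b ha hb).starAlgEquiv⟩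
end

section
/- Let A be a unital C*-algebra admitting a faithful tracial state and let n ≥ 1. If v is an element of the C*-algebra M_n(A) of n × n matrices over A with v* v ≤ v v*, then v* v = v v*; that is, A is stably finite. -/
open scoped ComplexOrder

/-- A unital C*-algebra `A` with a faithful tracial state is *stably finite*: for every
`n ≥ 1`, any `v` in the C*-algebra `Mₙ(A)` of `n × n` matrices over `A` with `v* v ≤ v v*`
satisfies `v* v = v v*`.  Here the order on `Mₙ(A)` is the canonical order on a C*-algebra,
in which the positive elements are exactly those of the form `a* a`; thus `v* v ≤ v v*` is
expressed by saying that `v v* - v* v` has the form `star w * w`. -/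
theorem stably_finite_of_faithful_tracial_state
    {A : Type*} [CStarAlgebra A]
    (τ : A →ₗ[ℂ] ℂ)
    (hτ_one : τ 1 = 1)
    (hτ_pos : ∀ a : A, 0 ≤ τ (star a * a))
    (hτ_tr : ∀ a b : A, τ (a * b) = τ (b * a))
    (hτ_faithful : ∀ a : A, τ (star a * a) = 0 → a = 0)
    (n : ℕ) (hn : 1 ≤ n)
    (v : Matrix (Fin n) (Fin n) A)
    (hv : ∃ w : Matrix (Fin n) (Fin n) A, v * star v = star v * v + star w * w) :
    star v * v = v * star v := by
  obtain ⟨w, hw⟩ := hv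
  have trsum : ∀ a b : Matrix (Fin n) (Fin n) A,
      ∑ i, τ ((a * b) i i) = ∑ i, τ ((b * a) i i) := by
    intro a b
    simp only [Matrix.mul_apply, map_sum]
    rw [Finset.sum_comm]
    exact Finset.sum_congr rfl fun k _ => Finset.sum_congr rfl fun i _ => hτ_tr _ _
  have hsum0 : ∑ i, τ ((star w * w) i i) = 0 := by
    have h1 : ∑ i, τ ((v * star v) i i)
        = ∑ i, τ ((star v * v) i i) + ∑ i, τ ((star w * w) i i) := by
      rw [hw]
      simp [Matrix.add_apply, Finset.sum_add_distrib]
    have h2 := trsum v (star v)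
    rw [h2] at h1
    exact (left_eq_add.mp h1)
  have hterm : ∀ i, τ ((star w * w) i i) = ∑ k, τ (star (w k i) * w k i) := by
    intro i
    simp [Matrix.mul_apply, Matrix.star_apply]
  have hsum0' : ∑ i, ∑ k, τ (star (w k i) * w k i) = 0 := by
    rw [← hsum0]; exact (Finset.sum_congr rfl fun i _ => (hterm i).symm)
  have hzero : ∀ i ∈ Finset.univ, ∀ k ∈ Finset.univ, τ (star (w k i) * w k i) = 0 := by
    have h := (Finset.sum_eq_zero_iff_of_nonneg (fun i _ =>
      Finset.sum_nonneg fun k _ => hτ_pos (w k i))).mp hsum0'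
    intro i hi k hk
    exact (Finset.sum_eq_zero_iff_of_nonneg fun k _ => hτ_pos (w k i)).mp (h i hi) k hk
  have hw0 : w = 0 := by
    ext k i
    exact hτ_faithful _ (hzero i (Finset.mem_univ i) k (Finset.mem_univ k))
  rw [hw0] at hw
  simp at hw
  exact hw.symm
end

section
/- Let M be a von Neumann algebra on a complex Hilbert space H, and let p, q ∈ M be projections such that p is sub-equivalent to q in M and q is sub-equivalent to p in M. Then p and q are Murray–von Neumann equivalent in M: there exists u ∈ M with u* u = p and u u* = q. -/
/-!
Compose the two partial isometries: `z = w * v` maps `p` isometrically onto a subprojection of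
`w * star w ≤ p`, so `a = p - w * star w` is a wandering projection for `z`. Let `e` be the range
projection of the family `z ^ n * a * star z ^ n`; then `e = a + z * e * star z`. As in the
Schröder–Bernstein theorem, `u = v * e + star w * (p - e)` uses `v` on `e` and `star w` on
`p - e ≤ w * star w`, and the identity for `e` makes the two final projections add up to `q`.
-/

theorem IsSelfAdjoint.mul_eq_right_of_mul_eq_left {R : Type*} [Mul R] [StarMul R] {a b : R}
    (ha : IsSelfAdjoint a) (hb : IsSelfAdjoint b) (h : a * b = b) : b * a = b := by
  simpa [ha.star_eq, hb.star_eq] using congr(star $h)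

section PartialIsometry

theorem mul_star_mul_self_of_isStarProjection {E : Type*} [NonUnitalNormedRing E] [StarRing E]
    [CStarRing E] {a : E} (h : IsStarProjection (star a * a)) : a * (star a * a) = a := by
  set p := star a * a
  have hp : star p = p := h.isSelfAdjoint.star_eq
  have hpp : p * p = p := h.isIdempotentElem
  have : star (a * p - a) * (a * p - a) = 0 := by
    calc star (a * p - a) * (a * p - a) = star p * p * p - star p * p - p * p + p := by
          simp only [star_sub, star_mul, p]; noncomm_ring
      _ = 0 := by rw [hp, hpp, hpp]; abel
  exact sub_eq_zero.mp ((CStarRing.star_mul_self_eq_zero_iff _).mp this)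

variable {R : Type*} [Ring R] [StarRing R] {p q w : R}

theorem mul_eq_self_of_mul_mul_star_self (hw : w * (star w * w) = w)
    (h : q * (w * star w) = w * star w) : q * w = w :=
  calc q * w = q * (w * star w) * w := by rw [mul_assoc, mul_assoc, hw]
    _ = w := by rw [h, mul_assoc, hw]

theorem IsStarProjection.sub_mul_star_self (hp : IsStarProjection p)
    (hw : w * (star w * w) = w) (hpw : p * w = w) : IsStarProjection (p - w * star w) := by
  have hww : IsStarProjection (w * star w) :=
    ⟨by rw [IsIdempotentElem, ← mul_assoc, mul_assoc w, hw], IsSelfAdjoint.mul_star_self w⟩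
  refine hww.sub_of_mul_eq_left hp ?_
  rw [mul_assoc, ← hp.isSelfAdjoint.star_eq, ← star_mul, hpw]

end PartialIsometry

/-- In `B(H)` this says that `e` is the projection onto the closed span of the ranges of the
`T i`, expressed through the left annihilator of the family. -/
structure IsRangeProjection {R ι : Type*} [Mul R] [Star R] [Zero R] (T : ι → R) (e : R) :
    Prop where
  isStarProjection : IsStarProjection e
  mul_eq : ∀ i, e * T i = T i
  mul_eq_zero : ∀ b, (∀ i, b * T i = 0) → b * e = 0

namespace IsRangeProjection

variable {R ι : Type*} [Ring R] [StarRing R] {T : ι → R} {e : R}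

theorem mul_eq_of_forall (he : IsRangeProjection T e) {f : R} (hf : ∀ i, f * T i = T i) :
    f * e = e := by
  have := he.mul_eq_zero (1 - f) fun i => by rw [sub_mul, one_mul, hf i, sub_self]
  rwa [sub_mul, one_mul, sub_eq_zero, eq_comm] at this

theorem mul_mul_self_of_forall (he : IsRangeProjection T e) {a : R}
    (ha : ∀ i, e * (a * T i) = a * T i) : e * a * e = a * e := by
  have := he.mul_eq_zero ((1 - e) * a) fun i => by
    rw [mul_assoc, sub_mul, one_mul, ha i, sub_self]
  rwa [sub_mul, one_mul, sub_mul, sub_eq_zero, eq_comm] at this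

theorem commute (he : IsRangeProjection T e) {y : R} (hy : ∀ i, Commute y (T i))
    (hy' : ∀ i, Commute (star y) (T i)) : Commute y e := by
  have key : ∀ x : R, (∀ i, Commute x (T i)) → e * x * e = x * e := fun x hx =>
    he.mul_mul_self_of_forall fun i => by rw [(hx i).eq, ← mul_assoc, he.mul_eq i]
  have hstar : e * y * e = e * y := by
    simpa [he.isStarProjection.isSelfAdjoint.star_eq, mul_assoc] using congr(star $(key _ hy'))
  exact (key y hy).symm.trans hstar

theorem mem_vonNeumannAlgebra {H : Type*} [NormedAddCommGroup H] [InnerProductSpace ℂ H]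
    [CompleteSpace H] {M : VonNeumannAlgebra H} {T : ι → H →L[ℂ] H} {e : H →L[ℂ] H}
    (he : IsRangeProjection T e) (hT : ∀ i, T i ∈ M) : e ∈ M := by
  have hcomm : ∀ y ∈ M.commutant, ∀ i, Commute y (T i) := fun y hy i =>
    (VonNeumannAlgebra.mem_commutant_iff.mp hy (T i) (hT i)).symm
  rw [← M.commutant_commutant, VonNeumannAlgebra.mem_commutant_iff]
  exact fun y hy => he.commute (hcomm y hy) (hcomm _ (star_mem hy))

end IsRangeProjection

theorem ContinuousLinearMap.exists_isRangeProjection {H ι : Type*} [NormedAddCommGroup H]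
    [InnerProductSpace ℂ H] [CompleteSpace H] (T : ι → H →L[ℂ] H) :
    ∃ e, IsRangeProjection T e := by
  set K := (⨆ i, (T i).range).topologicalClosure
  refine ⟨K.starProjection, isStarProjection_starProjection, fun i => ?_, fun b hb => ?_⟩
  · ext x
    exact K.starProjection_eq_self_iff.mpr
      (Submodule.le_topologicalClosure _ (le_iSup (fun i => (T i).range) i ⟨x, rfl⟩))
  · have hK : K ≤ b.ker := by
      refine Submodule.topologicalClosure_minimal _ (iSup_le fun i => ?_) b.isClosed_ker
      rintro _ ⟨x, rfl⟩
      exact congr($(hb i) x)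
    ext x
    exact hK (K.starProjection_apply_mem x)

section ConjPow

variable {R : Type*} [Ring R] [StarRing R] {p z a : R}

def conjPow (z a : R) (n : ℕ) : R := z ^ n * a * star z ^ n

@[simp]
theorem conjPow_zero (z a : R) : conjPow z a 0 = a := by simp [conjPow]

theorem conjPow_succ (z a : R) (n : ℕ) : conjPow z a (n + 1) = z * conjPow z a n * star z := by
  rw [conjPow, conjPow, pow_succ', pow_succ]
  simp only [mul_assoc]

theorem conjPow_mem {S : Type*} [SetLike S R] [SubmonoidClass S R] [StarMemClass S R] {s : S}
    (hz : z ∈ s) (ha : a ∈ s) (n : ℕ) : conjPow z a n ∈ s :=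
  mul_mem (mul_mem (pow_mem hz n) ha) (pow_mem (star_mem hz) n)

theorem mul_conjPow (hpz : p * z = z) (hpa : p * a = a) (n : ℕ) :
    p * conjPow z a n = conjPow z a n := by
  cases n with
  | zero => simpa using hpa
  | succ n => rw [conjPow_succ, ← mul_assoc, ← mul_assoc, hpz]

theorem conjPow_mul (hp : IsSelfAdjoint p) (hpz : p * z = z) (hap : a * p = a) (n : ℕ) :
    conjPow z a n * p = conjPow z a n := by
  have hzp : star z * p = star z := by simpa [hp.star_eq] using congr(star $hpz)
  cases n with
  | zero => simpa using hap
  | succ n => rw [conjPow_succ, mul_assoc, hzp]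

theorem mul_conjPow_eq_conjPow_succ_mul (hp : IsSelfAdjoint p) (hz : star z * z = p)
    (hpz : p * z = z) (hap : a * p = a) (n : ℕ) :
    z * conjPow z a n = conjPow z a (n + 1) * z := by
  rw [conjPow_succ, mul_assoc, hz, mul_assoc, conjPow_mul hp hpz hap]

end ConjPow

namespace IsRangeProjection

variable {R : Type*} [Ring R] [StarRing R] {p q v w z a e : R}

theorem mul_mul_self_of_conjPow (hp : IsSelfAdjoint p) (hz : star z * z = p) (hpz : p * z = z)
    (hap : a * p = a) (he : IsRangeProjection (conjPow z a) e) : e * z * e = z * e :=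
  he.mul_mul_self_of_forall fun n => by
    rw [mul_conjPow_eq_conjPow_succ_mul hp hz hpz hap, ← mul_assoc, he.mul_eq]

theorem eq_add_of_conjPow (hp : IsSelfAdjoint p) (hz : star z * z = p) (hpz : p * z = z)
    (ha : IsStarProjection a) (hpa : p * a = a) (haz : a * z = 0)
    (he : IsRangeProjection (conjPow z a) e) : e = a + z * e * star z := by
  have hap : a * p = a := hp.mul_eq_right_of_mul_eq_left ha.isSelfAdjoint hpa
  have hza : star z * a = 0 := by simpa [ha.isSelfAdjoint.star_eq] using congr(star $haz)
  have hea : e * a = a := by simpa using he.mul_eq 0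
  have hf : IsSelfAdjoint (a + z * e * star z) :=
    ha.isSelfAdjoint.add (he.isStarProjection.isSelfAdjoint.conjugate z)
  have hef : e * (a + z * e * star z) = a + z * e * star z := by
    rw [mul_add, hea, ← mul_assoc, ← mul_assoc, he.mul_mul_self_of_conjPow hp hz hpz hap]
  have hfe : (a + z * e * star z) * e = e := he.mul_eq_of_forall fun n => by
    cases n with
    | zero => simp [add_mul, mul_assoc, hza, ha.isIdempotentElem.eq]
    | succ n =>
      calc (a + z * e * star z) * conjPow z a (n + 1)
          = a * z * conjPow z a n * star z + z * e * (star z * z) * conjPow z a n * star z := by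
            rw [conjPow_succ]; noncomm_ring
        _ = z * (e * (p * conjPow z a n)) * star z := by rw [haz, hz]; noncomm_ring
        _ = conjPow z a (n + 1) := by rw [mul_conjPow hpz hpa, he.mul_eq, conjPow_succ]
  calc e = (a + z * e * star z) * e := hfe.symm
    _ = a + z * e * star z := he.isStarProjection.isSelfAdjoint.mul_eq_right_of_mul_eq_left hf hef

theorem schroederBernstein (hp : IsStarProjection p) (hq : IsStarProjection q)
    (hv : star v * v = p) (hqv : q * v = v) (hw : star w * w = q) (hwq : w * q = w)
    (hpw : p * w = w) (he : IsRangeProjection (conjPow (w * v) (p - w * star w)) e) :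
    star (v * e + star w * (p - e)) * (v * e + star w * (p - e)) = p ∧
      (v * e + star w * (p - e)) * star (v * e + star w * (p - e)) = q := by
  have hp_sa := hp.isSelfAdjoint
  have he_sa := he.isStarProjection.isSelfAdjoint
  have hee : e * e = e := he.isStarProjection.isIdempotentElem.eq
  have hz : star (w * v) * (w * v) = p := by
    rw [star_mul, mul_assoc, ← mul_assoc (star w), hw, hqv, hv]
  have hpz : p * (w * v) = w * v := by rw [← mul_assoc, hpw]
  have hpa : p * (p - w * star w) = p - w * star w := by
    rw [mul_sub, hp.isIdempotentElem.eq, ← mul_assoc, hpw]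
  have haz : (p - w * star w) * (w * v) = 0 := by
    rw [sub_mul, hpz, mul_assoc, ← mul_assoc (star w), hw, ← mul_assoc, hwq, sub_self]
  have ha := hp.sub_mul_star_self (by rw [hw, hwq]) hpw
  have hpe : p * e = e := he.mul_eq_of_forall (mul_conjPow hpz hpa)
  have hep : e * p = e := hp_sa.mul_eq_right_of_mul_eq_left he_sa hpe
  have hrze : (p - e) * (w * v) * e = 0 := by
    rw [sub_mul, sub_mul, hpz, he.mul_mul_self_of_conjPow hp_sa hz hpz
      (hp_sa.mul_eq_right_of_mul_eq_left ha.isSelfAdjoint hpa), sub_self]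
  have hezr : e * star (w * v) * (p - e) = 0 := by
    simpa [hp_sa.star_eq, he_sa.star_eq, mul_assoc] using congr(star $hrze)
  have hrr : (p - e) * (p - e) = p - e := by
    rw [mul_sub, sub_mul, sub_mul, hp.isIdempotentElem.eq, hpe, hep, hee]; abel
  have hww : w * star w = p - e + w * v * e * star (w * v) := by
    nth_rw 1 [he.eq_add_of_conjPow hp_sa hz hpz ha hpa haz]; abel
  have hrww : (p - e) * (w * star w) = p - e := by
    rw [hww, mul_add, hrr, ← mul_assoc, ← mul_assoc, hrze, zero_mul, add_zero]
  have hvq : star v * q = star v := by simpa [hq.isSelfAdjoint.star_eq] using congr(star $hqv)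
  have hstar : star (v * e + star w * (p - e)) = e * star v + (p - e) * w := by
    rw [star_add, star_mul, star_mul, star_star, he_sa.star_eq, star_sub, hp_sa.star_eq,
      he_sa.star_eq]
  constructor
  · calc star (v * e + star w * (p - e)) * (v * e + star w * (p - e))
        = e * (star v * v) * e + e * star (w * v) * (p - e) + (p - e) * (w * v) * e
          + (p - e) * (w * star w) * (p - e) := by rw [hstar, star_mul]; noncomm_ring
      _ = p := by rw [hv, hep, hee, hezr, hrze, hrww, hrr]; abel
  · calc (v * e + star w * (p - e)) * star (v * e + star w * (p - e))
        = v * (e * e) * star v + v * (e * (p - e)) * w + star w * ((p - e) * e) * star v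
          + star w * ((p - e) * (p - e)) * w := by rw [hstar]; noncomm_ring
      _ = v * e * star v + star w * (w * star w - w * v * e * star (w * v)) * w := by
        rw [hee, mul_sub, hep, hee, sub_mul, hpe, hee, sub_self, hrr, hww]; noncomm_ring
      _ = v * e * star v + (star w * w) * (star w * w)
          - (star w * w * v) * e * (star v * (star w * w)) := by rw [star_mul]; noncomm_ring
      _ = q := by rw [hw, hq.isIdempotentElem.eq, hqv, hvq]; abel

end IsRangeProjection

theorem murrayVonNeumann_equiv_of_subequiv_of_subequiv_general
    {H : Type*} [NormedAddCommGroup H] [InnerProductSpace ℂ H] [CompleteSpace H]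
    (M : VonNeumannAlgebra H) (p q : H →L[ℂ] H)
    (hpM : p ∈ M)
    (hp_sa : IsSelfAdjoint p) (hp_idem : IsIdempotentElem p)
    (hq_sa : IsSelfAdjoint q) (hq_idem : IsIdempotentElem q)
    (hpq : ∃ v ∈ M, star v * v = p ∧ q * (v * star v) = v * star v)
    (hqp : ∃ w ∈ M, star w * w = q ∧ p * (w * star w) = w * star w) :
    ∃ u ∈ M, star u * u = p ∧ u * star u = q := by
  obtain ⟨v, hvM, hv, hqvv⟩ := hpq
  obtain ⟨w, hwM, hw, hpww⟩ := hqp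
  have hp : IsStarProjection p := ⟨hp_idem, hp_sa⟩
  have hq : IsStarProjection q := ⟨hq_idem, hq_sa⟩
  have hvv : v * (star v * v) = v := mul_star_mul_self_of_isStarProjection (hv ▸ hp)
  have hww : w * (star w * w) = w := mul_star_mul_self_of_isStarProjection (hw ▸ hq)
  obtain ⟨e, he⟩ :=
    ContinuousLinearMap.exists_isRangeProjection (conjPow (w * v) (p - w * star w))
  have heM : e ∈ M := he.mem_vonNeumannAlgebra
    (conjPow_mem (mul_mem hwM hvM) (sub_mem hpM (mul_mem hwM (star_mem hwM))))
  refine ⟨v * e + star w * (p - e),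
    add_mem (mul_mem hvM heM) (mul_mem (star_mem hwM) (sub_mem hpM heM)), ?_⟩
  exact he.schroederBernstein hp hq hv (mul_eq_self_of_mul_mul_star_self hvv hqvv) hw
    (hw ▸ hww) (mul_eq_self_of_mul_mul_star_self hww hpww)

/-- In a von Neumann algebra `M` on a complex Hilbert space, if two projections `p, q ∈ M`
are mutually sub-equivalent (each is Murray–von Neumann equivalent in `M` to a
subprojection of the other), then `p` and `q` are Murray–von Neumann equivalent in `M`. -/
theorem murrayVonNeumann_equiv_of_subequiv_of_subequiv
    {H : Type*} [NormedAddCommGroup H] [InnerProductSpace ℂ H] [CompleteSpace H]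
    (M : VonNeumannAlgebra H) (p q : H →L[ℂ] H)
    (hpM : p ∈ M) (hqM : q ∈ M)
    (hp_sa : IsSelfAdjoint p) (hp_idem : IsIdempotentElem p)
    (hq_sa : IsSelfAdjoint q) (hq_idem : IsIdempotentElem q)
    (hpq : ∃ v ∈ M, star v * v = p ∧ q * (v * star v) = v * star v)
    (hqp : ∃ w ∈ M, star w * w = q ∧ p * (w * star w) = w * star w) :
    ∃ u ∈ M, star u * u = p ∧ u * star u = q :=
  murrayVonNeumann_equiv_of_subequiv_of_subequiv_general M p q hpM hp_sa hp_idem hq_sa hq_idem hpq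
    hqp
end

section
/- Let θ be an irrational real number and let φ be a real number. Then the additive subgroups ℤ + θℤ and ℤ + φℤ of ℝ are equal if and only if φ − θ ∈ ℤ or φ + θ ∈ ℤ. -/
/-!
If `ℤ + θℤ = ℤ + φℤ`, write `φ = m + nθ` and `θ = c + dφ`; substituting gives
`θ = (c + dm) + dnθ`, and since `1, θ` are `ℤ`-linearly independent for irrational `θ`,
`dn = 1`, so `n = ±1`. Conversely, replacing a generator `b` by `±b + k` does not change
the subgroup generated together with `1`.
-/

namespace AddSubgroup

variable {G : Type*} [AddCommGroup G]

theorem closure_pair_le_of_mem {a b c : G} (hc : c ∈ closure ({a, b} : Set G)) :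
    closure ({a, c} : Set G) ≤ closure ({a, b} : Set G) := by
  rw [closure_le]
  rintro x (rfl | rfl)
  · exact subset_closure (by simp)
  · exact hc

theorem closure_pair_add_zsmul (a b : G) (n : ℤ) :
    closure ({a, b + n • a} : Set G) = closure ({a, b} : Set G) := by
  apply le_antisymm <;> apply closure_pair_le_of_mem <;> rw [mem_closure_pair]
  · exact ⟨n, 1, by rw [one_zsmul, add_comm]⟩
  · exact ⟨-n, 1, by rw [one_zsmul, neg_zsmul]; abel⟩

theorem closure_pair_neg (a b : G) :
    closure ({a, -b} : Set G) = closure ({a, b} : Set G) := by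
  apply le_antisymm <;> apply closure_pair_le_of_mem <;> rw [mem_closure_pair]
  · exact ⟨0, -1, by simp⟩
  · exact ⟨0, -1, by simp⟩

end AddSubgroup

theorem AddSubgroup.mem_closure_one_pair_iff {x θ : ℝ} :
    x ∈ AddSubgroup.closure ({1, θ} : Set ℝ) ↔ ∃ m n : ℤ, x = m + n * θ := by
  simp only [AddSubgroup.mem_closure_pair, zsmul_eq_mul, mul_one, eq_comm]

theorem Irrational.intCast_add_intCast_mul_inj {θ : ℝ} (hθ : Irrational θ) {a b c d : ℤ}
    (h : a + b * θ = c + d * θ) : a = c ∧ b = d := by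
  have hbd : b = d := by
    by_contra hne
    have key : ((b - d : ℤ) : ℝ) * θ = (c - a : ℤ) := by push_cast; linear_combination h
    exact (hθ.intCast_mul (sub_ne_zero.mpr hne)).ne_int _ key
  subst hbd
  exact ⟨by exact_mod_cast add_right_cancel h, rfl⟩

/-- For an irrational number `θ` and a real number `φ`, the subgroups `ℤ + θℤ` and
`ℤ + φℤ` of `ℝ` coincide if and only if `φ - θ ∈ ℤ` or `φ + θ ∈ ℤ`. -/
theorem subgroup_int_add_zsmul_eq_iff
    (θ : ℝ) (hθ : Irrational θ) (φ : ℝ) :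
    AddSubgroup.closure ({1, θ} : Set ℝ) = AddSubgroup.closure ({1, φ} : Set ℝ) ↔
      ((∃ n : ℤ, φ - θ = n) ∨ (∃ n : ℤ, φ + θ = n)) := by
  constructor
  · intro h
    have hφ_mem : φ ∈ AddSubgroup.closure ({1, θ} : Set ℝ) :=
      h ▸ AddSubgroup.subset_closure (by simp)
    have hθ_mem : θ ∈ AddSubgroup.closure ({1, φ} : Set ℝ) :=
      h ▸ AddSubgroup.subset_closure (by simp)
    obtain ⟨m, n, hφ⟩ := AddSubgroup.mem_closure_one_pair_iff.mp hφ_mem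
    obtain ⟨c, d, hθ'⟩ := AddSubgroup.mem_closure_one_pair_iff.mp hθ_mem
    have hdn : d * n = 1 := by
      refine (hθ.intCast_add_intCast_mul_inj (a := 0) (c := c + d * m) ?_).2.symm
      push_cast; linear_combination hθ' + (d : ℝ) * hφ
    rcases Int.eq_one_or_neg_one_of_mul_eq_one (mul_comm d n ▸ hdn) with rfl | rfl
    · exact .inl ⟨m, by rw [hφ]; push_cast; ring⟩
    · exact .inr ⟨m, by rw [hφ]; push_cast; ring⟩
  · rintro (⟨n, hn⟩ | ⟨n, hn⟩)
    · rw [show φ = θ + n • (1 : ℝ) by rw [zsmul_one]; linarith,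
        AddSubgroup.closure_pair_add_zsmul]
    · rw [show φ = -θ + n • (1 : ℝ) by rw [zsmul_one]; linarith,
        AddSubgroup.closure_pair_add_zsmul, AddSubgroup.closure_pair_neg]
end

section
/- The C*-algebras C(𝕋, ℂ) and C(𝕋 × 𝕋, ℂ) of continuous complex-valued functions on the circle and on the 2-torus are not isomorphic as *-algebras over ℂ: there is no ℂ-linear star-algebra isomorphism between them. -/
/-!
A ⋆-isomorphism `C(X, ℂ) ≃ C(Y, ℂ)` induces a homeomorphism between the character spaces,
which are `X` and `Y` (Gelfand duality); so it suffices that the circle and the torus are not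
homeomorphic. Removing the two points `±1` disconnects the circle, since the imaginary part does
not vanish on the rest but takes both signs there. Removing finitely many points from a product
of two connected spaces without isolated points leaves it connected: what is left contains the
dense complement of a "grid" `s ×ˢ t`, and that complement is a union of pairwise intersecting
crosses `{u} × Y ∪ X × {v}`.
-/
open Set WeakDual

section CharacterSpace

variable {𝕜 A B : Type*} [NontriviallyNormedField 𝕜]
  [NormedRing A] [NormedAlgebra 𝕜 A] [CompleteSpace A] [StarRing A]
  [NormedRing B] [NormedAlgebra 𝕜 B] [CompleteSpace B] [StarRing B]

noncomputable def StarAlgEquiv.characterSpaceHomeomorph (e : A ≃⋆ₐ[𝕜] B) :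
    characterSpace 𝕜 A ≃ₜ characterSpace 𝕜 B where
  toFun := CharacterSpace.compContinuousMap (e.symm : B →⋆ₐ[𝕜] A)
  invFun := CharacterSpace.compContinuousMap (e : A →⋆ₐ[𝕜] B)
  left_inv φ := by ext; simp
  right_inv φ := by ext; simp
  continuous_toFun := map_continuous _
  continuous_invFun := map_continuous _

end CharacterSpace

noncomputable def StarAlgEquiv.continuousMapHomeomorph {𝕜 X Y : Type*} [RCLike 𝕜]
    [TopologicalSpace X] [CompactSpace X] [T2Space X]
    [TopologicalSpace Y] [CompactSpace Y] [T2Space Y] (e : C(X, 𝕜) ≃⋆ₐ[𝕜] C(Y, 𝕜)) : X ≃ₜ Y :=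
  (CharacterSpace.homeoEval X 𝕜).trans
    (e.characterSpaceHomeomorph.trans (CharacterSpace.homeoEval Y 𝕜).symm)

theorem isPreconnected_compl_prod {X Y : Type*} [TopologicalSpace X] [TopologicalSpace Y]
    [PreconnectedSpace X] [PreconnectedSpace Y] {s : Set X} {t : Set Y}
    (hs : sᶜ.Nonempty) (ht : tᶜ.Nonempty) : IsPreconnected (s ×ˢ t)ᶜ := by
  obtain ⟨u₀, hu₀⟩ := hs
  obtain ⟨v₀, hv₀⟩ := ht
  let cross : ↥sᶜ × ↥tᶜ → Set (X × Y) := fun uv => {(uv.1 : X)} ×ˢ univ ∪ univ ×ˢ {(uv.2 : Y)}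
  have hcross : (s ×ˢ t)ᶜ = ⋃ uv, cross uv := by
    ext ⟨x, y⟩
    simp only [mem_compl_iff, mem_prod, not_and_or, mem_iUnion, cross, mem_union,
      mem_singleton_iff, mem_univ, and_true, true_and, Prod.exists, Subtype.exists]
    constructor
    · rintro (hx | hy)
      · exact ⟨x, hx, v₀, hv₀, Or.inl rfl⟩
      · exact ⟨u₀, hu₀, y, hy, Or.inr rfl⟩
    · rintro ⟨u, hu, v, hv, rfl | rfl⟩
      · exact Or.inl hu
      · exact Or.inr hv
  rw [hcross]
  refine IsPreconnected.iUnion_of_reflTransGen (fun uv => ?_) (fun uv uv' => ?_)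
  · exact (isPreconnected_singleton.prod isPreconnected_univ).union ((uv.1 : X), (uv.2 : Y))
      (by simp) (by simp) (isPreconnected_univ.prod isPreconnected_singleton)
  · exact Relation.ReflTransGen.single ⟨((uv.1 : X), (uv'.2 : Y)), by simp [cross]⟩

theorem Set.Finite.dense_compl {X : Type*} [TopologicalSpace X] [T1Space X]
    [∀ x : X, Filter.NeBot (nhdsWithin x {x}ᶜ)] {s : Set X} (hs : s.Finite) : Dense sᶜ := by
  simpa [compl_eq_univ_sdiff] using dense_univ.sdiff_finite hs

theorem Set.Finite.isPreconnected_compl_prod {X Y : Type*}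
    [TopologicalSpace X] [TopologicalSpace Y] [PreconnectedSpace X] [PreconnectedSpace Y]
    [T1Space X] [T1Space Y]
    [∀ x : X, Filter.NeBot (nhdsWithin x {x}ᶜ)] [∀ y : Y, Filter.NeBot (nhdsWithin y {y}ᶜ)]
    [Nonempty X] [Nonempty Y] {F : Set (X × Y)} (hF : F.Finite) : IsPreconnected Fᶜ := by
  have hs := (hF.image Prod.fst).dense_compl
  have ht := (hF.image Prod.snd).dense_compl
  refine (_root_.isPreconnected_compl_prod hs.nonempty ht.nonempty).subset_closure
    (compl_subset_compl.mpr fun p hp => ⟨mem_image_of_mem _ hp, mem_image_of_mem _ hp⟩) ?_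
  calc Fᶜ ⊆ closure ((Prod.fst '' F)ᶜ ×ˢ univ) := by
        rw [closure_prod_eq, hs.closure_eq, closure_univ, univ_prod_univ]; exact subset_univ _
    _ ⊆ _ := closure_mono fun _ hp h => hp.1 (mem_prod.mp h).1

instance : Nontrivial Circle := ⟨⟨-1, 1, Circle.neg_ne_self 1⟩⟩

theorem Circle.eq_one_or_eq_neg_one_of_im_eq_zero {z : Circle} (hz : (z : ℂ).im = 0) :
    z = 1 ∨ z = -1 := by
  have hre : (z : ℂ).re ^ 2 = 1 := by
    have := Complex.sq_norm (z : ℂ)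
    rw [Circle.norm_coe, Complex.normSq_apply, hz] at this
    nlinarith
  rcases sq_eq_one_iff.mp hre with h | h
  · exact Or.inl (Circle.ext (Complex.ext (by simp [h]) (by simp [hz])))
  · exact Or.inr (Circle.ext (Complex.ext (by simp [h]) (by simp [hz])))

theorem Circle.im_exp (t : ℝ) : (Circle.exp t : ℂ).im = Real.sin t := by
  rw [Circle.coe_exp, Complex.exp_ofReal_mul_I_im]

theorem Circle.not_isPreconnected_compl_one_neg_one :
    ¬ IsPreconnected ({1, -1}ᶜ : Set Circle) := by
  intro h
  have him : IsPreconnected ((fun z : Circle => (z : ℂ).im) '' {1, -1}ᶜ) :=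
    h.image _ (Complex.continuous_im.comp continuous_subtype_val).continuousOn
  have mem_image_of_sin {t : ℝ} (ht : Real.sin t ≠ 0) :
      Real.sin t ∈ (fun z : Circle => (z : ℂ).im) '' {1, -1}ᶜ := by
    refine ⟨Circle.exp t, fun h1 => ht ?_, Circle.im_exp t⟩
    rcases h1 with h1 | h1 <;> rw [← Circle.im_exp, h1] <;> simp
  obtain ⟨z, hz, hz0⟩ := him.Icc_subset
    (by simpa using mem_image_of_sin (t := -(Real.pi / 2)) (by simp))
    (by simpa using mem_image_of_sin (t := Real.pi / 2) (by simp))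
    (show (0 : ℝ) ∈ Icc (-1) 1 by norm_num)
  exact hz (Circle.eq_one_or_eq_neg_one_of_im_eq_zero hz0)

theorem Circle.isEmpty_homeomorph_prod : IsEmpty (Circle ≃ₜ Circle × Circle) := by
  refine ⟨fun h => Circle.not_isPreconnected_compl_one_neg_one ?_⟩
  rw [← h.isPreconnected_image, h.image_compl, image_pair]
  exact (toFinite _).isPreconnected_compl_prod

/-- The C*-algebras `C(𝕋, ℂ)` and `C(𝕋 × 𝕋, ℂ)` are not isomorphic as `ℂ`-star-algebras. -/
theorem continuousFunctions_circle_not_starAlgEquiv_torus :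
    IsEmpty (C(AddCircle (1 : ℝ), ℂ) ≃⋆ₐ[ℂ] C(AddCircle (1 : ℝ) × AddCircle (1 : ℝ), ℂ)) := by
  let c := AddCircle.homeomorphCircle (one_ne_zero (α := ℝ))
  exact ⟨fun e => Circle.isEmpty_homeomorph_prod.false
    (c.symm.trans (e.continuousMapHomeomorph.trans (c.prodCongr c)))⟩
end
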